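/- arXiv:2402.05299 — 2 statements merged into one kernel-verified Lean document; each statement's English description precedes it below -/
import Mathlib

section
/- Let 0 < p < ∞ and let w be a weight on (0,∞). Suppose there is a constant C such that W(t)/W(s) ≤ C (1 + log(s/t))^{−p} for all 0 < t ≤ s < ∞. Then w ∈ B*_∞; that is, there is a constant C′ with ∫_0^r (W(t)/t) dt ≤ C′ W(r) for all r > 0. -/
open MeasureTheory Filter Topology
open scoped ENNReal NNReal

noncomputable section

/-- The `u`-measure of a set `E`, `u(E) = ∫_E u`, as an extended nonnegative real. -/
def wMeas (u : ℝ → ℝ) (E : Set ℝ) : ℝ≥0∞ := ∫⁻ x in E, ENNReal.ofReal (u x)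

/-- The `u`-measure of a set `E`, `u(E) = ∫_E u(x) dx`, as a real number. -/
def wInt (u : ℝ → ℝ) (E : Set ℝ) : ℝ := ∫ x in E, u x

/-- `W(r) = ∫_0^r w(s) ds`. -/
def Wf (w : ℝ → ℝ) (r : ℝ) : ℝ := ∫ t in Set.Ioo (0:ℝ) r, w t

/-- A weight on `ℝ`: a positive locally integrable function. -/
def IsWeight (u : ℝ → ℝ) : Prop :=
  (∀ x, 0 < u x) ∧ MeasureTheory.LocallyIntegrable u volume

/-- A weight on `(0,∞)`: positive there and locally integrable on `(0,r)` for every `r > 0`. -/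
def IsWeightOn (w : ℝ → ℝ) : Prop :=
  (∀ t, 0 < t → 0 < w t) ∧ ∀ r, 0 < r → MeasureTheory.IntegrableOn w (Set.Ioo (0:ℝ) r) volume

/-- Decreasing rearrangement (with respect to the weight `u`) of an `ℝ≥0∞`-valued function. -/
def rearrE (u : ℝ → ℝ) (g : ℝ → ℝ≥0∞) (t : ℝ) : ℝ≥0∞ :=
  sInf {s : ℝ≥0∞ | wMeas u {x | s < g x} ≤ ENNReal.ofReal t}

/-- Decreasing rearrangement `f*_u` of `f` with respect to the weight `u`. -/
def rearr (u f : ℝ → ℝ) (t : ℝ) : ℝ≥0∞ :=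
  rearrE u (fun x => ENNReal.ofReal |f x|) t

/-- The quasinorm of `Λ^p_u(w)` for `ℝ≥0∞`-valued functions. -/
def lorentzNormE (p : ℝ) (u w : ℝ → ℝ) (g : ℝ → ℝ≥0∞) : ℝ≥0∞ :=
  (∫⁻ t in Set.Ioi (0:ℝ), rearrE u g t ^ p * ENNReal.ofReal (w t)) ^ (1/p)

/-- The quasinorm of the weighted Lorentz space `Λ^p_u(w)`. -/
def lorentzNorm (p : ℝ) (u w f : ℝ → ℝ) : ℝ≥0∞ :=
  lorentzNormE p u w (fun x => ENNReal.ofReal |f x|)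

/-- The quasinorm of `Λ^{p,∞}_u(w)` for `ℝ≥0∞`-valued functions. -/
def weakLorentzNormE (p : ℝ) (u w : ℝ → ℝ) (g : ℝ → ℝ≥0∞) : ℝ≥0∞ :=
  ⨆ t ∈ Set.Ioi (0:ℝ), ENNReal.ofReal (Wf w t) ^ (1/p) * rearrE u g t

/-- The quasinorm of the weak weighted Lorentz space `Λ^{p,∞}_u(w)`. -/
def weakLorentzNorm (p : ℝ) (u w f : ℝ → ℝ) : ℝ≥0∞ :=
  weakLorentzNormE p u w (fun x => ENNReal.ofReal |f x|)

/-- Membership in `Λ^p_u(w)`. -/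
def MemLambda (p : ℝ) (u w f : ℝ → ℝ) : Prop :=
  Measurable f ∧ lorentzNorm p u w f < ∞

/-- The quasinorm of the Lorentz space `L^{p,q}(u)`, `0 < q ≤ ∞`. -/
def lpqNorm (p : ℝ) (q : ℝ≥0∞) (u f : ℝ → ℝ) : ℝ≥0∞ :=
  if q = ∞ then ⨆ t ∈ Set.Ioi (0:ℝ), ENNReal.ofReal t ^ (1/p) * rearr u f t
  else (∫⁻ t in Set.Ioi (0:ℝ),
      (ENNReal.ofReal t ^ (1/p) * rearr u f t) ^ q.toReal / ENNReal.ofReal t) ^ (1/q.toReal)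

/-- Membership in `L^{p,q}(u)`. -/
def MemLpq (p : ℝ) (q : ℝ≥0∞) (u f : ℝ → ℝ) : Prop :=
  Measurable f ∧ lpqNorm p q u f < ∞

/-- The associate norm `‖g‖_{(Λ^p_u(w))'}`. -/
def assocNorm (p : ℝ) (u w g : ℝ → ℝ) : ℝ≥0∞ :=
  ⨆ (f : ℝ → ℝ) (_ : MemLambda p u w f) (_ : lorentzNorm p u w f ≠ 0),
    ENNReal.ofReal |∫ x, f x * g x * u x| / lorentzNorm p u w f

/-- The truncated Hilbert integral `∫_{|x−y|>ε} f(y)/(x−y) dy`. -/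
def pvIntegral (f : ℝ → ℝ) (x ε : ℝ) : ℝ :=
  ∫ y in {y : ℝ | ε < |x - y|}, f y / (x - y)

/-- The principal value limit defining `Hf(x)` exists and equals `L`. -/
def HasHilbert (f : ℝ → ℝ) (x L : ℝ) : Prop :=
  Filter.Tendsto (fun ε : ℝ => (1 / Real.pi) * pvIntegral f x ε) (𝓝[>] 0) (𝓝 L)

/-- The Hilbert transform `Hf(x)` (junk value where the principal value does not exist). -/
def hilbert (f : ℝ → ℝ) (x : ℝ) : ℝ :=
  limUnder (𝓝[>] (0:ℝ)) (fun ε => (1 / Real.pi) * pvIntegral f x ε)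

/-- The Hilbert maximal operator `H*f(x)`. -/
def hilbertMax (f : ℝ → ℝ) (x : ℝ) : ℝ≥0∞ :=
  ⨆ ε ∈ Set.Ioi (0:ℝ), ENNReal.ofReal ((1 / Real.pi) * |pvIntegral f x ε|)

/-- The Hardy–Littlewood maximal operator over intervals of `ℝ`. -/
def maxOp (u : ℝ → ℝ) (x : ℝ) : ℝ≥0∞ :=
  ⨆ (a : ℝ) (b : ℝ) (_ : x ∈ Set.Ioo a b),
    (∫⁻ y in Set.Ioo a b, ENNReal.ofReal |u y|) / ENNReal.ofReal (b - a)

/-- The Muckenhoupt class `A_1`: `Mu ≤ C u` a.e. -/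
def A1 (u : ℝ → ℝ) : Prop :=
  ∃ C : ℝ, 0 < C ∧ ∀ᵐ x : ℝ ∂volume, maxOp u x ≤ ENNReal.ofReal (C * u x)

/-- The Muckenhoupt class `A_p`, `p > 1`. -/
def Ap (p : ℝ) (u : ℝ → ℝ) : Prop :=
  ∃ C : ℝ, 0 < C ∧ ∀ a b : ℝ, a < b →
    ((∫⁻ x in Set.Ioo a b, ENNReal.ofReal (u x)) / ENNReal.ofReal (b - a)) *
      ((∫⁻ x in Set.Ioo a b, ENNReal.ofReal (u x ^ (-1 / (p - 1)))) /
        ENNReal.ofReal (b - a)) ^ (p - 1)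
      ≤ ENNReal.ofReal C

/-- The class `B_p`: `∫_r^∞ (r/t)^p w(t) dt ≤ C W(r)`. -/
def Bp (p : ℝ) (w : ℝ → ℝ) : Prop :=
  ∃ C : ℝ, 0 < C ∧ ∀ r : ℝ, 0 < r →
    (∫⁻ t in Set.Ioi r, ENNReal.ofReal ((r / t) ^ p * w t)) ≤ ENNReal.ofReal (C * Wf w r)

/-- The class `B_{p,∞}`: the Hardy operator maps `L^p_dec(w)` to `L^{p,∞}(w)`. -/
def BpInfty (p : ℝ) (w : ℝ → ℝ) : Prop :=
  ∃ C : ℝ, 0 < C ∧ ∀ f : ℝ → ℝ, (∀ t, 0 < t → 0 ≤ f t) → AntitoneOn f (Set.Ioi 0) →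
    ∀ t : ℝ, 0 < t →
      ENNReal.ofReal (Wf w t) ^ (1/p) *
          ((∫⁻ s in Set.Ioo (0:ℝ) t, ENNReal.ofReal (f s)) / ENNReal.ofReal t)
        ≤ ENNReal.ofReal C *
            (∫⁻ s in Set.Ioi (0:ℝ), ENNReal.ofReal (f s) ^ p * ENNReal.ofReal (w s)) ^ (1/p)

/-- The class `B*_∞`: `∫_0^r W(t)/t dt ≤ C W(r)`. -/
def BstarInfty (w : ℝ → ℝ) : Prop :=
  ∃ C : ℝ, 0 < C ∧ ∀ r : ℝ, 0 < r →
    (∫⁻ t in Set.Ioo (0:ℝ) r, ENNReal.ofReal (Wf w t / t)) ≤ ENNReal.ofReal (C * Wf w r)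

/-- The `Δ_2` condition: `W(2r) ≤ C W(r)`. -/
def Delta2 (w : ℝ → ℝ) : Prop :=
  ∃ C : ℝ, 0 < C ∧ ∀ r : ℝ, 0 < r → Wf w (2 * r) ≤ C * Wf w r

/-- A doubling weight on `ℝ`: `u(2I) ≤ C u(I)` for every bounded interval `I`. -/
def DoublingWeight (u : ℝ → ℝ) : Prop :=
  ∃ C : ℝ, 0 < C ∧ ∀ c r : ℝ, 0 < r →
    wInt u (Set.Ioo (c - 2*r) (c + 2*r)) ≤ C * wInt u (Set.Ioo (c - r) (c + r))

/-- `φ_I(t) = sup{|E| : E ⊆ I, u(E) = t}` for `I = (a,b)`. -/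
def phiI (u : ℝ → ℝ) (a b t : ℝ) : ℝ :=
  sSup {m : ℝ | ∃ E : Set ℝ, MeasurableSet E ∧ E ⊆ Set.Ioo a b ∧
    wInt u E = t ∧ (volume E).toReal = m}

/-- The index `p_w`:  `inf{p > 0 : t^p/W(t) ∈ L^{p'-1}((0,1), dt/t)}`, where for `p ≤ 1`
(`p' = ∞`) the condition means essential boundedness on `(0,1)`. -/
def pwIndex (w : ℝ → ℝ) : ℝ :=
  sInf {p : ℝ | 0 < p ∧
    ((p ≤ 1 ∧ ∃ C : ℝ, ∀ᵐ t ∂(volume.restrict (Set.Ioo (0:ℝ) 1)), t ^ p / Wf w t ≤ C) ∨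
     (1 < p ∧ (∫⁻ t in Set.Ioo (0:ℝ) 1,
        ENNReal.ofReal ((t ^ p / Wf w t) ^ (1 / (p - 1)) / t)) < ∞))}

section Aux

open Set

def LogDecay (p : ℝ) (w : ℝ → ℝ) : Prop :=
  ∃ C : ℝ, 0 < C ∧ ∀ t s : ℝ, 0 < t → t ≤ s →
    Wf w t / Wf w s ≤ C * (1 + Real.log (s/t)) ^ (-p)

variable {w : ℝ → ℝ} {p : ℝ}

lemma Wf_pos (hw : IsWeightOn w) {r : ℝ} (hr : 0 < r) : 0 < Wf w r := by
  rw [Wf, setIntegral_pos_iff_support_of_nonneg_ae]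
  · refine lt_of_lt_of_le ?_ (measure_mono (s := Ioo (0:ℝ) r)
      (fun x hx => ⟨(hw.1 x hx.1).ne', hx⟩))
    simp [hr]
  · exact (ae_restrict_iff' measurableSet_Ioo).mpr (ae_of_all _ fun x hx => (hw.1 x hx.1).le)
  · exact hw.2 r hr

lemma Wf_nonneg (hw : IsWeightOn w) (r : ℝ) : 0 ≤ Wf w r := by
  exact setIntegral_nonneg measurableSet_Ioo fun x hx => (hw.1 x hx.1).le

lemma log_decay_double (hw : IsWeightOn w) (hp : 0 < p) (h : LogDecay p w) :
    LogDecay (2*p) w := by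
  obtain ⟨C, hC, hle⟩ := h
  refine ⟨C^2 * 2^(2*p), by positivity, fun t s ht hts => ?_⟩
  have hs : (0:ℝ) < s := lt_of_lt_of_le ht hts
  set m := Real.sqrt (t*s) with hm
  have hm0 : 0 < m := Real.sqrt_pos.mpr (by positivity)
  have htm : t ≤ m :=
    calc t = Real.sqrt (t*t) := (Real.sqrt_mul_self ht.le).symm
      _ ≤ m := Real.sqrt_le_sqrt (by nlinarith)
  have hms : m ≤ s :=
    calc m ≤ Real.sqrt (s*s) := Real.sqrt_le_sqrt (by nlinarith)
      _ = s := Real.sqrt_mul_self hs.le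
  set L := Real.log (s/t) with hL
  have hL0 : 0 ≤ L := Real.log_nonneg ((one_le_div ht).mpr hts)
  have hlog1 : Real.log (m/t) = L/2 := by
    rw [hm, hL, Real.log_div (Real.sqrt_pos.mpr (by positivity)).ne' ht.ne',
      Real.log_sqrt (by positivity), Real.log_mul ht.ne' hs.ne',
      Real.log_div hs.ne' ht.ne']
    ring
  have hlog2 : Real.log (s/m) = L/2 := by
    rw [hm, hL, Real.log_div hs.ne' (Real.sqrt_pos.mpr (by positivity)).ne',
      Real.log_sqrt (by positivity), Real.log_mul ht.ne' hs.ne',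
      Real.log_div hs.ne' ht.ne']
    ring
  have h1 := hle t m ht htm
  have h2 := hle m s hm0 hms
  rw [hlog1] at h1
  rw [hlog2] at h2
  have hWm := Wf_pos hw hm0
  have hWs := Wf_pos hw hs
  have hsplit : Wf w t / Wf w s = (Wf w t / Wf w m) * (Wf w m / Wf w s) := by
    field_simp
  have hb : (0:ℝ) < 1 + L/2 := by linarith
  have hprod : Wf w t / Wf w s ≤ (C * (1 + L/2) ^ (-p)) * (C * (1 + L/2) ^ (-p)) := by
    rw [hsplit]
    exact mul_le_mul h1 h2 (div_nonneg (Wf_nonneg hw m) hWs.le)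
      (by positivity)
  have hrw : (C * (1 + L/2) ^ (-p)) * (C * (1 + L/2) ^ (-p))
      = C^2 * (1 + L/2) ^ (-(2*p)) := by
    rw [show -(2*p) = -p + -p by ring, Real.rpow_add hb]
    ring
  have hbase : (1+L)/2 ≤ 1 + L/2 := by linarith
  have hmono : (1 + L/2) ^ (-(2*p)) ≤ ((1+L)/2) ^ (-(2*p)) :=
    Real.rpow_le_rpow_of_nonpos (by linarith) hbase (by linarith)
  have hdiv : ((1+L)/2 : ℝ) ^ (-(2*p)) = 2^(2*p) * (1+L) ^ (-(2*p)) := by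
    rw [Real.div_rpow (by linarith) (by norm_num), Real.rpow_neg (by norm_num : (0:ℝ) ≤ 2)]
    field_simp
  calc Wf w t / Wf w s ≤ C^2 * (1 + L/2) ^ (-(2*p)) := by rw [← hrw]; exact hprod
    _ ≤ C^2 * (2^(2*p) * (1+L) ^ (-(2*p))) := by
        rw [hdiv] at hmono
        exact mul_le_mul_of_nonneg_left hmono (by positivity)
    _ = C^2 * 2^(2*p) * (1 + Real.log (s/t)) ^ (-(2*p)) := by rw [hL]; ring

lemma log_decay_pow (hw : IsWeightOn w) (hp : 0 < p) (h : LogDecay p w) (k : ℕ) :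
    LogDecay (2^k * p) w := by
  induction k with
  | zero => simpa using h
  | succ n ih =>
    have h2 := log_decay_double hw (by positivity : (0:ℝ) < 2^n * p) ih
    rw [show (2:ℝ)^(n+1)*p = 2*(2^n*p) from by ring]
    exact h2

lemma BstarInfty_of_log_decay_one_lt (hp : 1 < p) (hw : IsWeightOn w) (h : LogDecay p w) :
    BstarInfty w := by
  obtain ⟨C, hC, hle⟩ := h
  -- integrability of (1+u)^(-p) on (0,∞)
  have hInt : IntegrableOn (fun u : ℝ => (1+u) ^ (-p)) (Ioi 0) volume := by
    have h1 : IntegrableOn (fun v : ℝ => v ^ (-p)) (Ioi 1) volume :=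
      integrableOn_Ioi_rpow_of_lt (by linarith) one_pos
    have h2 : IntegrableOn (((fun v : ℝ => v ^ (-p)) ∘ (· + (1:ℝ)))) ((· + (1:ℝ)) ⁻¹' Ioi 1)
        volume := by
      rw [MeasurePreserving.integrableOn_comp_preimage
        (measurePreserving_add_right volume (1:ℝ))
        (Homeomorph.addRight (1:ℝ)).measurableEmbedding]
      exact h1
    have hpre : ((· + (1:ℝ)) ⁻¹' Ioi 1 : Set ℝ) = Ioi 0 := by
      ext x; simp
    rw [hpre] at h2
    exact h2.congr_fun (fun u _ => by simp [Function.comp, add_comm]) measurableSet_Ioi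
  set I : ℝ := ∫ u in Ioi (0:ℝ), (1+u) ^ (-p) with hI
  have hI0 : 0 ≤ I := setIntegral_nonneg measurableSet_Ioi fun u hu =>
    Real.rpow_nonneg (by simp at hu; linarith) _
  refine ⟨C * I + 1, by positivity, fun r hr => ?_⟩
  set g : ℝ → ℝ := fun t => (1 + Real.log (r/t)) ^ (-p) / t with hg
  -- change of variables φ u = r e^{-u}
  set φ : ℝ → ℝ := fun u => r * Real.exp (-u) with hφ
  set φ' : ℝ → ℝ := fun u => r * (Real.exp (-u) * (-1)) with hφ'
  have hderiv : ∀ u ∈ Ioi (0:ℝ), HasDerivWithinAt φ (φ' u) (Ioi 0) u := by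
    intro u _
    exact (((hasDerivAt_id u).neg.exp).const_mul r).hasDerivWithinAt
  have hinj : InjOn φ (Ioi 0) := by
    intro a _ b _ hab
    have := mul_left_cancel₀ hr.ne' hab
    have := Real.exp_injective this
    linarith
  have himg : φ '' (Ioi 0) = Ioo 0 r := by
    ext t
    constructor
    · rintro ⟨u, hu, rfl⟩
      have hu0 : 0 < u := hu
      constructor
      · positivity
      · have : Real.exp (-u) < 1 := Real.exp_lt_one_iff.mpr (by linarith)
        calc r * Real.exp (-u) < r * 1 := by nlinarith [Real.exp_pos (-u)]
          _ = r := mul_one r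
    · rintro ⟨ht0, htr⟩
      refine ⟨Real.log (r/t), Real.log_pos ((one_lt_div ht0).mpr htr), ?_⟩
      show r * Real.exp (-Real.log (r/t)) = t
      rw [Real.exp_neg, Real.exp_log (by positivity)]
      field_simp
  have hcomp : ∀ u ∈ Ioi (0:ℝ), |φ' u| • g (φ u) = (1+u) ^ (-p) := by
    intro u _
    have he : (0:ℝ) < Real.exp (-u) := Real.exp_pos _
    have habs : |φ' u| = r * Real.exp (-u) := by
      rw [hφ']
      simp [abs_of_pos, abs_of_nonneg, he.le, hr.le, abs_mul, abs_of_pos he, abs_of_pos hr]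
    have hlog : Real.log (r / (r * Real.exp (-u))) = u := by
      rw [show r / (r * Real.exp (-u)) = (Real.exp (-u))⁻¹ by field_simp,
        ← Real.exp_neg, neg_neg, Real.log_exp]
    rw [habs]
    show (r * Real.exp (-u)) * ((1 + Real.log (r / (r * Real.exp (-u)))) ^ (-p) / (r * Real.exp (-u))) = _
    rw [hlog]
    field_simp
  have hg_int : IntegrableOn g (Ioo 0 r) volume := by
    rw [← himg, integrableOn_image_iff_integrableOn_abs_deriv_smul measurableSet_Ioi hderiv hinj]
    exact hInt.congr_fun (fun u hu => (hcomp u hu).symm) measurableSet_Ioi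
  have hg_eq : ∫ t in Ioo (0:ℝ) r, g t = I := by
    rw [← himg, integral_image_eq_integral_abs_deriv_smul measurableSet_Ioi hderiv hinj]
    exact setIntegral_congr_fun measurableSet_Ioi hcomp
  have hg_nn : 0 ≤ᵐ[volume.restrict (Ioo (0:ℝ) r)] g :=
    (ae_restrict_iff' measurableSet_Ioo).mpr (ae_of_all _ fun t ht => by
      have h1 : (0:ℝ) ≤ 1 + Real.log (r/t) := by
        have := Real.log_nonneg ((one_le_div ht.1).mpr ht.2.le)
        linarith
      exact div_nonneg (Real.rpow_nonneg h1 _) ht.1.le)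
  have hWr := Wf_pos hw hr
  calc (∫⁻ t in Set.Ioo (0:ℝ) r, ENNReal.ofReal (Wf w t / t))
      ≤ ∫⁻ t in Set.Ioo (0:ℝ) r, ENNReal.ofReal (C * Wf w r) * ENNReal.ofReal (g t) := by
        refine lintegral_mono_ae ((ae_restrict_iff' measurableSet_Ioo).mpr
          (ae_of_all _ fun t ht => ?_))
        have hb := hle t r ht.1 ht.2.le
        have h1 : Wf w t ≤ C * (1 + Real.log (r/t)) ^ (-p) * Wf w r :=
          (div_le_iff₀ hWr).mp hb
        have h2 : Wf w t / t ≤ C * (1 + Real.log (r/t)) ^ (-p) * Wf w r / t :=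
          div_le_div_of_nonneg_right h1 ht.1.le
        rw [← ENNReal.ofReal_mul (by positivity)]
        refine ENNReal.ofReal_le_ofReal ?_
        calc Wf w t / t ≤ C * (1 + Real.log (r/t)) ^ (-p) * Wf w r / t := h2
          _ = C * Wf w r * g t := by rw [hg]; ring
    _ = ENNReal.ofReal (C * Wf w r) * ∫⁻ t in Set.Ioo (0:ℝ) r, ENNReal.ofReal (g t) :=
        lintegral_const_mul' _ _ ENNReal.ofReal_ne_top
    _ = ENNReal.ofReal (C * Wf w r) * ENNReal.ofReal I := by
        rw [← hg_eq, ofReal_integral_eq_lintegral_ofReal hg_int hg_nn]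
    _ ≤ ENNReal.ofReal ((C * I + 1) * Wf w r) := by
        rw [← ENNReal.ofReal_mul (by positivity)]
        exact ENNReal.ofReal_le_ofReal (by nlinarith)


end Aux

/-- the logarithmic decay of `W(t)/W(s)` implies `w ∈ B*_∞`. -/
theorem BstarInfty_of_log_decay (p : ℝ) (hp : 0 < p) (w : ℝ → ℝ) (hw : IsWeightOn w)
    (h : ∃ C : ℝ, 0 < C ∧ ∀ t s : ℝ, 0 < t → t ≤ s →
      Wf w t / Wf w s ≤ C * (1 + Real.log (s/t)) ^ (-p)) :
    BstarInfty w := by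
  obtain ⟨k, hk⟩ := pow_unbounded_of_one_lt (1/p) (one_lt_two (α := ℝ))
  have hkp : 1 < 2^k * p := by
    rw [div_lt_iff₀ hp] at hk
    linarith
  exact BstarInfty_of_log_decay_one_lt hkp hw (log_decay_pow hw hp h k)
end
end

section
/- Let p, r ∈ (0,∞) and q, s ∈ (0,∞], and suppose p < 1 or p ≠ r. Then there is no doubling weight u on ℝ such that the Hilbert transform H is well defined on L^{p,q}(u) (for every f ∈ L^{p,q}(u) the principal-value limit defining Hf(x) exists for a.e. x) and satisfies ‖Hf‖_{L^{r,s}(u)} ≤ C ‖f‖_{L^{p,q}(u)} for all f ∈ L^{p,q}(u) and some constant C. -/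
open MeasureTheory Filter Topology
open scoped ENNReal NNReal

noncomputable section

/-!
Test the bound on `f = 1_{(α,β)}` with `(α,β) ⊆ (a,b)`. On `(b, 2b - a)` one has
`Hf ≥ (β - α) / (2π (b - a))`, and the rearrangements of `f` and of `Hf` are squeezed between
step functions, so that `‖f‖_{L^{p,q}(u)} ≲ u(α,β)^{1/p}` and
`‖Hf‖_{L^{r,s}(u)} ≳ (β - α)/(b - a) · u(b, 2b - a)^{1/r}`. Hence
`(β - α) u(b, 2b - a)^{1/r} ≲ (b - a) u(α, β)^{1/p}`.

If `p ≠ r`, take `(α,β) = (a,b) = (-t,0)`: doubling gives `u(-t,0) ≲ u(0,t)`, so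
`v^{1/r} ≲ v^{1/p}` for `v = u(0,t)`, and these values fill `(0,∞)` because doubling also forces
`u(0,2t) ≥ (1 + c) u(0,t)`. If `p = r < 1`, repeated halving of `(0,1)` gives intervals of length
`2^{-n}` and `u`-measure at most `2^{-n} u(0,1)`, so `2^{-n} ≲ 2^{-n/p}`, which fails as `n → ∞`.
-/

section WeightedIntervals

variable {u : ℝ → ℝ}

lemma IsWeight.integrableOn_Ioo (hu : IsWeight u) (a b : ℝ) : IntegrableOn u (Set.Ioo a b) :=
  (hu.2.integrableOn_isCompact isCompact_Icc).mono_set Set.Ioo_subset_Icc_self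

lemma IsWeight.intervalIntegrable (hu : IsWeight u) (a b : ℝ) : IntervalIntegrable u volume a b :=
  (hu.2.integrableOn_isCompact isCompact_uIcc).intervalIntegrable

lemma IsWeight.wInt_Ioo_pos (hu : IsWeight u) {a b : ℝ} (hab : a < b) :
    0 < wInt u (Set.Ioo a b) := by
  have hsupp : Function.support u = Set.univ :=
    Set.eq_univ_of_forall fun x => (hu.1 x).ne'
  rw [wInt, setIntegral_pos_iff_support_of_nonneg_ae
    (.of_forall fun x => (hu.1 x).le) (hu.integrableOn_Ioo a b), hsupp, Set.univ_inter,
    Real.volume_Ioo]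
  simpa using hab

lemma IsWeight.wMeas_Ioo (hu : IsWeight u) (a b : ℝ) :
    wMeas u (Set.Ioo a b) = ENNReal.ofReal (wInt u (Set.Ioo a b)) :=
  (ofReal_integral_eq_lintegral_ofReal (hu.integrableOn_Ioo a b)
    (.of_forall fun x => (hu.1 x).le)).symm

lemma IsWeight.wInt_Ioo_mono (hu : IsWeight u) {a b a' b' : ℝ} (ha : a' ≤ a) (hb : b ≤ b') :
    wInt u (Set.Ioo a b) ≤ wInt u (Set.Ioo a' b') :=
  setIntegral_mono_set (hu.integrableOn_Ioo a' b') (.of_forall fun x => (hu.1 x).le)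
    (Set.Ioo_subset_Ioo ha hb).eventuallyLE

lemma wInt_Ioo_eq_intervalIntegral {a b : ℝ} (hab : a ≤ b) :
    wInt u (Set.Ioo a b) = ∫ x in a..b, u x := by
  rw [wInt, ← integral_Ioc_eq_integral_Ioo, intervalIntegral.integral_of_le hab]

lemma IsWeight.wInt_Ioo_add (hu : IsWeight u) {a m b : ℝ} (ham : a ≤ m) (hmb : m ≤ b) :
    wInt u (Set.Ioo a m) + wInt u (Set.Ioo m b) = wInt u (Set.Ioo a b) := by
  rw [wInt_Ioo_eq_intervalIntegral ham, wInt_Ioo_eq_intervalIntegral hmb,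
    wInt_Ioo_eq_intervalIntegral (ham.trans hmb),
    intervalIntegral.integral_add_adjacent_intervals (hu.intervalIntegrable a m)
      (hu.intervalIntegrable m b)]

end WeightedIntervals

section Rearrangement

variable {u f : ℝ → ℝ}

lemma rearr_le_indicator_Iio (hf : ∀ x, |f x| ≤ 1) {M : ℝ}
    (hM : wMeas u {x | f x ≠ 0} ≤ ENNReal.ofReal M) (t : ℝ) :
    rearr u f t ≤ (Set.Iio M).indicator (fun _ => ENNReal.ofReal 1) t := by
  by_cases ht : t ∈ Set.Iio M
  · rw [Set.indicator_of_mem ht]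
    refine sInf_le ?_
    have hempty : {x | ENNReal.ofReal 1 < ENNReal.ofReal |f x|} = ∅ :=
      Set.eq_empty_of_forall_notMem fun x hx => hx.not_ge (ENNReal.ofReal_le_ofReal (hf x))
    change wMeas u {x | ENNReal.ofReal 1 < ENNReal.ofReal |f x|} ≤ _
    rw [hempty, wMeas, Measure.restrict_empty, lintegral_zero_measure]
    exact zero_le
  · rw [Set.indicator_of_notMem ht, nonpos_iff_eq_zero]
    refine le_antisymm (sInf_le ?_) zero_le
    have hsupp : {x | (0 : ℝ≥0∞) < ENNReal.ofReal |f x|} = {x | f x ≠ 0} := by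
      ext x; simp
    change wMeas u {x | (0 : ℝ≥0∞) < ENNReal.ofReal |f x|} ≤ _
    rw [hsupp]
    exact hM.trans (ENNReal.ofReal_le_ofReal (not_lt.1 ht))

lemma indicator_Iio_le_rearr {S : Set ℝ} {c W : ℝ} (hS : ∀ x ∈ S, c ≤ |f x|)
    (hW : ENNReal.ofReal W ≤ wMeas u S) {t : ℝ} (ht : 0 < t) :
    (Set.Iio W).indicator (fun _ => ENNReal.ofReal c) t ≤ rearr u f t := by
  by_cases htW : t ∈ Set.Iio W
  · rw [Set.indicator_of_mem htW]
    refine le_sInf fun s hs => not_lt.1 fun hsc => ?_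
    have hsub : S ⊆ {x | s < ENNReal.ofReal |f x|} := fun x hx =>
      hsc.trans_le (ENNReal.ofReal_le_ofReal (hS x hx))
    exact hs.not_gt (((ENNReal.ofReal_lt_ofReal_iff (ht.trans htW)).2 htW).trans_le
      (hW.trans (lintegral_mono_set hsub)))
  · rw [Set.indicator_of_notMem htW]
    exact zero_le

end Rearrangement

def lpqFunctional (p : ℝ) (q : ℝ≥0∞) (φ : ℝ → ℝ≥0∞) : ℝ≥0∞ :=
  if q = ∞ then ⨆ t ∈ Set.Ioi (0:ℝ), ENNReal.ofReal t ^ (1/p) * φ t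
  else (∫⁻ t in Set.Ioi (0:ℝ),
      (ENNReal.ofReal t ^ (1/p) * φ t) ^ q.toReal / ENNReal.ofReal t) ^ (1/q.toReal)

section LpqFunctional

variable {p : ℝ} {q : ℝ≥0∞}

lemma lpqNorm_eq_lpqFunctional (u f : ℝ → ℝ) :
    lpqNorm p q u f = lpqFunctional p q (rearr u f) := rfl

lemma lpqFunctional_mono {φ ψ : ℝ → ℝ≥0∞} (h : ∀ t, 0 < t → φ t ≤ ψ t) :
    lpqFunctional p q φ ≤ lpqFunctional p q ψ := by
  unfold lpqFunctional
  split_ifs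
  · exact iSup₂_mono fun t ht => by gcongr; exact h t ht
  · refine ENNReal.rpow_le_rpow (setLIntegral_mono' measurableSet_Ioi fun t ht => ?_)
      (by positivity)
    gcongr
    exact h t ht

lemma lintegral_Ioo_ofReal_mul_rpow_sub_one {c γ M : ℝ} (hc : 0 ≤ c) (hγ : 0 < γ)
    (hM : 0 ≤ M) :
    ∫⁻ t in Set.Ioo 0 M, ENNReal.ofReal (c * t ^ (γ - 1)) = ENNReal.ofReal (c * M ^ γ / γ) := by
  have hint : IntegrableOn (fun t : ℝ => c * t ^ (γ - 1)) (Set.Ioo 0 M) := by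
    refine Integrable.const_mul ?_ c
    exact (intervalIntegrable_iff_integrableOn_Ioo_of_le hM).1
      (intervalIntegral.intervalIntegrable_rpow' (by linarith))
  rw [← ofReal_integral_eq_lintegral_ofReal hint
    (ae_restrict_of_forall_mem measurableSet_Ioo fun t ht => by
      have := ht.1; positivity),
    ← integral_Ioc_eq_integral_Ioo, ← intervalIntegral.integral_of_le hM,
    intervalIntegral.integral_const_mul, integral_rpow (Or.inl (by linarith)),
    sub_add_cancel, Real.zero_rpow hγ.ne', sub_zero, mul_div_assoc]

lemma ofReal_rpow_mul_ofReal_rpow_div {t c a b : ℝ} (ht : 0 < t) (hc : 0 ≤ c) (hb : 0 ≤ b) :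
    (ENNReal.ofReal t ^ a * ENNReal.ofReal c) ^ b / ENNReal.ofReal t
      = ENNReal.ofReal (c ^ b * t ^ (a * b - 1)) := by
  rw [ENNReal.ofReal_rpow_of_pos ht, ← ENNReal.ofReal_mul (by positivity),
    ENNReal.ofReal_rpow_of_nonneg (by positivity) hb, ← ENNReal.ofReal_div_of_pos ht,
    Real.mul_rpow (by positivity) hc, ← Real.rpow_mul ht.le, Real.rpow_sub_one ht.ne']
  ring_nf

lemma lpqFunctional_indicator_Iio_of_ne_top (hp : 0 < p) (hq : 0 < q) (hqt : q ≠ ∞)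
    {c M : ℝ} (hc : 0 ≤ c) (hM : 0 ≤ M) :
    lpqFunctional p q ((Set.Iio M).indicator fun _ => ENNReal.ofReal c)
      = ENNReal.ofReal ((p / q.toReal) ^ (1/q.toReal) * c * M ^ (1/p)) := by
  have hQ : 0 < q.toReal := ENNReal.toReal_pos hq.ne' hqt
  set γ := 1/p * q.toReal with hγ
  have hγ0 : 0 < γ := by positivity
  have hintegrand : ∀ t ∈ Set.Ioi (0:ℝ),
      (ENNReal.ofReal t ^ (1/p) * (Set.Iio M).indicator (fun _ => ENNReal.ofReal c) t)
          ^ q.toReal / ENNReal.ofReal t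
        = (Set.Iio M).indicator (fun t => ENNReal.ofReal (c ^ q.toReal * t ^ (γ - 1))) t := by
    intro t ht
    by_cases htM : t ∈ Set.Iio M
    · simp only [Set.indicator_of_mem htM]
      exact ofReal_rpow_mul_ofReal_rpow_div ht hc hQ.le
    · simp only [Set.indicator_of_notMem htM, mul_zero, ENNReal.zero_rpow_of_pos hQ,
        ENNReal.zero_div]
  rw [lpqFunctional, if_neg hqt, setLIntegral_congr_fun measurableSet_Ioi hintegrand,
    lintegral_indicator measurableSet_Iio, Measure.restrict_restrict measurableSet_Iio,
    Set.Iio_inter_Ioi, lintegral_Ioo_ofReal_mul_rpow_sub_one (by positivity) hγ0 hM,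
    ENNReal.ofReal_rpow_of_nonneg (by positivity) (by positivity)]
  congr 1
  rw [div_eq_mul_inv, Real.mul_rpow (by positivity) (by positivity),
    Real.mul_rpow (by positivity) (by positivity), ← Real.rpow_mul hc,
    ← Real.rpow_mul hM, hγ, mul_one_div_cancel hQ.ne', Real.rpow_one,
    show 1/p * q.toReal * (1/q.toReal) = 1/p by field_simp,
    show (1/p * q.toReal)⁻¹ = p / q.toReal by field_simp]
  ring

lemma lpqFunctional_indicator_Iio_top_le (hp : 0 < p) {c M : ℝ} (hc : 0 ≤ c) :
    lpqFunctional p ∞ ((Set.Iio M).indicator fun _ => ENNReal.ofReal c)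
      ≤ ENNReal.ofReal (c * M ^ (1/p)) := by
  rw [lpqFunctional, if_pos rfl]
  refine iSup₂_le fun t ht => ?_
  by_cases htM : t ∈ Set.Iio M
  · have ht : 0 < t := ht
    rw [Set.indicator_of_mem htM, ENNReal.ofReal_rpow_of_pos ht, ← ENNReal.ofReal_mul
      (by positivity), mul_comm c]
    exact ENNReal.ofReal_le_ofReal (mul_le_mul_of_nonneg_right
      (Real.rpow_le_rpow ht.le (le_of_lt htM) (by positivity)) hc)
  · rw [Set.indicator_of_notMem htM, mul_zero]
    exact zero_le

lemma le_lpqFunctional_indicator_Iio_top {c M : ℝ} (hM : 0 < M) :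
    ENNReal.ofReal ((1/2) ^ (1/p) * c * M ^ (1/p))
      ≤ lpqFunctional p ∞ ((Set.Iio M).indicator fun _ => ENNReal.ofReal c) := by
  rw [lpqFunctional, if_pos rfl]
  refine le_iSup₂_of_le (M/2) (half_pos hM) ?_
  rw [Set.indicator_of_mem (Set.mem_Iio.2 (half_lt_self hM)),
    ENNReal.ofReal_rpow_of_pos (half_pos hM), ← ENNReal.ofReal_mul (by positivity),
    div_eq_mul_one_div M, Real.mul_rpow hM.le (by norm_num)]
  exact le_of_eq (by ring_nf)

lemma exists_lpqNorm_le_of_abs_le_one (hp : 0 < p) (hq : 0 < q) :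
    ∃ A : ℝ, 0 < A ∧ ∀ (u f : ℝ → ℝ) (M : ℝ), 0 < M → (∀ x, |f x| ≤ 1) →
      wMeas u {x | f x ≠ 0} ≤ ENNReal.ofReal M →
        lpqNorm p q u f ≤ ENNReal.ofReal (A * M ^ (1/p)) := by
  have hstep : ∀ (u f : ℝ → ℝ) (M : ℝ), (∀ x, |f x| ≤ 1) →
      wMeas u {x | f x ≠ 0} ≤ ENNReal.ofReal M →
        lpqNorm p q u f ≤ lpqFunctional p q ((Set.Iio M).indicator fun _ => ENNReal.ofReal 1) :=
    fun u f M hf hM => (lpqNorm_eq_lpqFunctional u f).trans_le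
      (lpqFunctional_mono fun t _ => rearr_le_indicator_Iio hf hM t)
  by_cases hqt : q = ∞
  · subst hqt
    refine ⟨1, one_pos, fun u f M _ hf hM => (hstep u f M hf hM).trans ?_⟩
    simpa using lpqFunctional_indicator_Iio_top_le hp zero_le_one
  · have hQ : 0 < q.toReal := ENNReal.toReal_pos hq.ne' hqt
    refine ⟨(p / q.toReal) ^ (1/q.toReal), by positivity, fun u f M hM0 hf hM => ?_⟩
    rw [← mul_one ((p / q.toReal) ^ (1/q.toReal)),
      ← lpqFunctional_indicator_Iio_of_ne_top hp hq hqt zero_le_one hM0.le]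
    exact hstep u f M hf hM

lemma exists_le_lpqNorm_of_le_abs (hp : 0 < p) (hq : 0 < q) :
    ∃ B : ℝ, 0 < B ∧ ∀ (u f : ℝ → ℝ) (S : Set ℝ) (c W : ℝ), 0 ≤ c → 0 < W →
      (∀ x ∈ S, c ≤ |f x|) → ENNReal.ofReal W ≤ wMeas u S →
        ENNReal.ofReal (B * c * W ^ (1/p)) ≤ lpqNorm p q u f := by
  have hstep : ∀ (u f : ℝ → ℝ) (S : Set ℝ) (c W : ℝ), (∀ x ∈ S, c ≤ |f x|) →
      ENNReal.ofReal W ≤ wMeas u S →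
        lpqFunctional p q ((Set.Iio W).indicator fun _ => ENNReal.ofReal c) ≤ lpqNorm p q u f :=
    fun u f S c W hS hW => (lpqFunctional_mono fun t ht =>
      indicator_Iio_le_rearr hS hW ht).trans_eq (lpqNorm_eq_lpqFunctional u f).symm
  by_cases hqt : q = ∞
  · subst hqt
    exact ⟨(1/2) ^ (1/p), by positivity, fun u f S c W _ hW0 hS hW =>
      (le_lpqFunctional_indicator_Iio_top hW0).trans (hstep u f S c W hS hW)⟩
  · have hQ : 0 < q.toReal := ENNReal.toReal_pos hq.ne' hqt
    refine ⟨(p / q.toReal) ^ (1/q.toReal), by positivity, fun u f S c W hc hW0 hS hW => ?_⟩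
    rw [← lpqFunctional_indicator_Iio_of_ne_top hp hq hqt hc hW0.le]
    exact hstep u f S c W hS hW

end LpqFunctional

section HilbertOfIndicator

lemma pvIntegral_indicator_Ioo {α β x ε : ℝ} (hε : ε < x - β) :
    pvIntegral ((Set.Ioo α β).indicator 1) x ε = ∫ y in Set.Ioo α β, (x - y)⁻¹ := by
  have hdiv : (fun y => (Set.Ioo α β).indicator 1 y / (x - y))
      = (Set.Ioo α β).indicator fun y => (x - y)⁻¹ := by
    ext y
    by_cases hy : y ∈ Set.Ioo α β <;> simp [hy]
  have hsub : Set.Ioo α β ⊆ {y | ε < |x - y|} := fun y hy =>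
    (show ε < x - y by linarith [hy.2]).trans_le (le_abs_self _)
  rw [pvIntegral, hdiv, setIntegral_indicator measurableSet_Ioo, Set.inter_eq_right.2 hsub]

lemma hilbert_indicator_Ioo_of_lt {α β x : ℝ} (hx : β < x) :
    hilbert ((Set.Ioo α β).indicator 1) x = 1 / Real.pi * ∫ y in Set.Ioo α β, (x - y)⁻¹ := by
  refine Tendsto.limUnder_eq (tendsto_const_nhds.congr' ?_)
  filter_upwards [Ioo_mem_nhdsGT (sub_pos.2 hx)] with ε hε
  rw [pvIntegral_indicator_Ioo hε.2]

lemma div_le_hilbert_indicator_Ioo {α β x : ℝ} (hαβ : α < β) (hx : β < x) :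
    (β - α) / (Real.pi * (x - α)) ≤ hilbert ((Set.Ioo α β).indicator 1) x := by
  have hint : IntegrableOn (fun y => (x - y)⁻¹) (Set.Ioo α β) := by
    refine (ContinuousOn.integrableOn_compact isCompact_Icc ?_).mono_set Set.Ioo_subset_Icc_self
    exact ContinuousOn.inv₀ (by fun_prop) fun y hy => by linarith [hy.2]
  have hlow : (x - α)⁻¹ * (β - α) ≤ ∫ y in Set.Ioo α β, (x - y)⁻¹ := by
    have := setIntegral_ge_of_const_le (c := (x - α)⁻¹) measurableSet_Ioo
      (by simp [Real.volume_Ioo]) (fun y hy => inv_anti₀ (by linarith [hy.2])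
        (by linarith [hy.1])) hint
    rwa [Real.volume_real_Ioo_of_le hαβ.le, smul_eq_mul, mul_comm] at this
  rw [hilbert_indicator_Ioo_of_lt hx]
  calc (β - α) / (Real.pi * (x - α)) = 1 / Real.pi * ((x - α)⁻¹ * (β - α)) := by
        field_simp
    _ ≤ 1 / Real.pi * ∫ y in Set.Ioo α β, (x - y)⁻¹ := by gcongr

end HilbertOfIndicator

lemma exists_testing_inequality {p r : ℝ} {q s : ℝ≥0∞} (hp : 0 < p) (hr : 0 < r) (hq : 0 < q)
    (hs : 0 < s) {u : ℝ → ℝ} (hu : IsWeight u) {C : ℝ} (hC : 0 < C)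
    (hbd : ∀ f : ℝ → ℝ, MemLpq p q u f →
      lpqNorm r s u (hilbert f) ≤ ENNReal.ofReal C * lpqNorm p q u f) :
    ∃ K : ℝ, ∀ a α β b : ℝ, a ≤ α → α < β → β ≤ b →
      (β - α) * wInt u (Set.Ioo b (2*b - a)) ^ (1/r)
        ≤ K * (b - a) * wInt u (Set.Ioo α β) ^ (1/p) := by
  obtain ⟨A, hA, hupper⟩ := exists_lpqNorm_le_of_abs_le_one hp hq
  obtain ⟨B, hB, hlower⟩ := exists_le_lpqNorm_of_le_abs hr hs
  refine ⟨2 * Real.pi * C * A / B, fun a α β b haα hαβ hβb => ?_⟩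
  set f := (Set.Ioo α β).indicator (1 : ℝ → ℝ)
  set M := wInt u (Set.Ioo α β)
  set W := wInt u (Set.Ioo b (2*b - a))
  set c := (β - α) / (Real.pi * (2 * (b - a))) with hc
  have hab : 0 < b - a := by linarith
  have hM : 0 < M := hu.wInt_Ioo_pos hαβ
  have hW : 0 < W := hu.wInt_Ioo_pos (by linarith)
  have hf : ∀ x, |f x| ≤ 1 := fun x => by
    by_cases hx : x ∈ Set.Ioo α β <;> simp [f, hx]
  have hsupp : wMeas u {x | f x ≠ 0} ≤ ENNReal.ofReal M :=
    (lintegral_mono_set fun x hx => by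
      by_contra h; exact hx (Set.indicator_of_notMem h _)).trans (hu.wMeas_Ioo α β).le
  have hnorm_f := hupper u f M hM hf hsupp
  have hmem : MemLpq p q u f :=
    ⟨measurable_one.indicator measurableSet_Ioo, hnorm_f.trans_lt ENNReal.ofReal_lt_top⟩
  have hHf : ∀ x ∈ Set.Ioo b (2*b - a), c ≤ |hilbert f x| := fun x hx =>
    calc c ≤ (β - α) / (Real.pi * (x - α)) := by
          have hxα : 0 < x - α := by linarith [hx.1]
          rw [hc]
          gcongr
          linarith [hx.2]
      _ ≤ |hilbert f x| := (div_le_hilbert_indicator_Ioo hαβ (hβb.trans_lt hx.1)).trans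
          (le_abs_self _)
  have hnorm_Hf := hlower u (hilbert f) _ c W (by positivity) hW hHf (hu.wMeas_Ioo _ _).ge
  have hreal : B * c * W ^ (1/r) ≤ C * (A * M ^ (1/p)) := by
    rw [← ENNReal.ofReal_le_ofReal_iff (by positivity), ENNReal.ofReal_mul hC.le]
    exact hnorm_Hf.trans ((hbd f hmem).trans (by gcongr))
  calc (β - α) * W ^ (1/r) = 2 * Real.pi * (b - a) / B * (B * c * W ^ (1/r)) := by
        rw [hc]
        field_simp
    _ ≤ 2 * Real.pi * (b - a) / B * (C * (A * M ^ (1/p))) := by gcongr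
    _ = 2 * Real.pi * C * A / B * (b - a) * M ^ (1/p) := by ring

lemma eq_of_forall_rpow_le_mul_rpow {a b K : ℝ} (h : ∀ v : ℝ, 0 < v → v ^ a ≤ K * v ^ b) :
    a = b := by
  by_contra hab
  have he : a - b ≠ 0 := sub_ne_zero.2 hab
  set v := (|K| + 1) ^ (1 / (a - b))
  have hv : 0 < v := by positivity
  have hva : v ^ a = (|K| + 1) * v ^ b := by
    rw [← sub_add_cancel a b, Real.rpow_add hv, ← Real.rpow_mul (by positivity),
      one_div_mul_cancel he, Real.rpow_one]
  have := h v hv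
  rw [hva] at this
  nlinarith [le_abs_self K, Real.rpow_pos_of_pos hv b]

section Doubling

variable {u : ℝ → ℝ}

/-- Doubling twice about the centre of `(b, 2b - a)` covers `(a, b)`. -/
lemma DoublingWeight.exists_wInt_Ioo_le_adjacent (hd : DoublingWeight u) (hu : IsWeight u) :
    ∃ D : ℝ, 0 < D ∧ ∀ a b : ℝ, a < b →
      wInt u (Set.Ioo a b) ≤ D * wInt u (Set.Ioo b (2*b - a)) := by
  obtain ⟨C, hC, hdC⟩ := hd
  refine ⟨C^2, by positivity, fun a b hab => ?_⟩
  set m := (3*b - a)/2 with hm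
  have h₁ := hdC m (b - a) (by linarith)
  have h₂ := hdC m ((b - a)/2) (by linarith)
  rw [show m - 2 * ((b - a)/2) = m - (b - a) by ring,
    show m + 2 * ((b - a)/2) = m + (b - a) by ring,
    show m - (b - a)/2 = b by ring, show m + (b - a)/2 = 2*b - a by ring] at h₂
  calc wInt u (Set.Ioo a b) ≤ wInt u (Set.Ioo (m - 2*(b - a)) (m + 2*(b - a))) :=
        hu.wInt_Ioo_mono (by rw [hm]; linarith) (by rw [hm]; linarith)
    _ ≤ C * wInt u (Set.Ioo (m - (b - a)) (m + (b - a))) := h₁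
    _ ≤ C * (C * wInt u (Set.Ioo b (2*b - a))) := by gcongr
    _ = C^2 * wInt u (Set.Ioo b (2*b - a)) := by ring

lemma IsWeight.tendsto_wInt_Ioo_zero_two_pow (hu : IsWeight u) {D : ℝ} (hD : 0 < D)
    (hadj : ∀ a b : ℝ, a < b → wInt u (Set.Ioo a b) ≤ D * wInt u (Set.Ioo b (2*b - a))) :
    Tendsto (fun n : ℕ => wInt u (Set.Ioo 0 (2^n))) atTop atTop := by
  have hgrow : ∀ n : ℕ, (1 + D⁻¹)^n * wInt u (Set.Ioo 0 1) ≤ wInt u (Set.Ioo 0 (2^n)) := by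
    intro n
    induction n with
    | zero => simp
    | succ n ih =>
      have h2n : (0:ℝ) < 2^n := by positivity
      have hstep := hadj 0 (2^n) h2n
      rw [sub_zero, ← pow_succ'] at hstep
      rw [← hu.wInt_Ioo_add h2n.le (pow_le_pow_right₀ one_le_two n.le_succ), pow_succ]
      calc (1 + D⁻¹)^n * (1 + D⁻¹) * wInt u (Set.Ioo 0 1)
          ≤ wInt u (Set.Ioo 0 (2^n)) * (1 + D⁻¹) := by nlinarith [inv_pos.2 hD]
        _ ≤ wInt u (Set.Ioo 0 (2^n)) + wInt u (Set.Ioo (2^n) (2^(n+1))) := by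
          rw [mul_add, mul_one, ← div_eq_mul_inv]
          gcongr
          exact (div_le_iff₀' hD).2 hstep
  refine tendsto_atTop_mono hgrow (Tendsto.atTop_mul_const (hu.wInt_Ioo_pos one_pos) ?_)
  exact tendsto_pow_atTop_atTop_of_one_lt (by simpa using hD)

lemma IsWeight.exists_wInt_Ioo_zero_eq (hu : IsWeight u) {D : ℝ} (hD : 0 < D)
    (hadj : ∀ a b : ℝ, a < b → wInt u (Set.Ioo a b) ≤ D * wInt u (Set.Ioo b (2*b - a)))
    {v : ℝ} (hv : 0 < v) : ∃ t : ℝ, 0 < t ∧ wInt u (Set.Ioo 0 t) = v := by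
  obtain ⟨n, hn⟩ := ((hu.tendsto_wInt_Ioo_zero_two_pow hD hadj).eventually_gt_atTop v).exists
  have hF : ContinuousOn (fun t => ∫ x in (0:ℝ)..t, u x) (Set.Icc 0 (2^n)) :=
    (intervalIntegral.continuous_primitive hu.intervalIntegrable 0).continuousOn
  have hmem : v ∈ Set.Icc (∫ x in (0:ℝ)..0, u x) (∫ x in (0:ℝ)..2^n, u x) := by
    rw [intervalIntegral.integral_same, ← wInt_Ioo_eq_intervalIntegral (by positivity)]
    exact ⟨hv.le, hn.le⟩
  obtain ⟨t, ht, htv⟩ := intermediate_value_Icc (by positivity) hF hmem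
  have ht0 : t ≠ 0 := by
    rintro rfl
    simp only [intervalIntegral.integral_same] at htv
    exact hv.ne htv
  exact ⟨t, lt_of_le_of_ne ht.1 (Ne.symm ht0), by rwa [wInt_Ioo_eq_intervalIntegral ht.1]⟩

lemma IsWeight.eq_of_forall_wInt_Ioo_rpow_le (hu : IsWeight u) (hd : DoublingWeight u)
    {p r K : ℝ} (hp : 0 < p) (h : ∀ a b : ℝ, a < b →
      wInt u (Set.Ioo b (2*b - a)) ^ (1/r) ≤ K * wInt u (Set.Ioo a b) ^ (1/p)) :
    p = r := by
  obtain ⟨D, hD, hadj⟩ := hd.exists_wInt_Ioo_le_adjacent hu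
  suffices 1/r = 1/p by simpa using this.symm
  refine eq_of_forall_rpow_le_mul_rpow (K := K * D ^ (1/p)) fun v hv => ?_
  obtain ⟨t, ht, rfl⟩ := hu.exists_wInt_Ioo_zero_eq hD hadj hv
  have hK : 0 ≤ K := (pos_of_mul_pos_left ((Real.rpow_pos_of_pos
    (hu.wInt_Ioo_pos (show (1:ℝ) < 2*1 - 0 by norm_num)) (1/r)).trans_le (h 0 1 one_pos))
    (Real.rpow_nonneg (hu.wInt_Ioo_pos one_pos).le _)).le
  have hadj_t := hadj (-t) 0 (by linarith)
  have htest := h (-t) 0 (by linarith)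
  rw [show 2*0 - -t = t by ring] at hadj_t htest
  calc wInt u (Set.Ioo 0 t) ^ (1/r) ≤ K * wInt u (Set.Ioo (-t) 0) ^ (1/p) := htest
    _ ≤ K * (D * wInt u (Set.Ioo 0 t)) ^ (1/p) := by
      gcongr
      exact (hu.wInt_Ioo_pos (by linarith)).le
    _ = K * D ^ (1/p) * wInt u (Set.Ioo 0 t) ^ (1/p) := by
      rw [Real.mul_rpow hD.le hv.le]; ring

end Doubling

section SmallExponent

variable {u : ℝ → ℝ}

lemma IsWeight.exists_Ioo_wInt_le_div_two_pow (hu : IsWeight u) {a b : ℝ} (hab : a ≤ b)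
    (n : ℕ) : ∃ α β : ℝ, a ≤ α ∧ β ≤ b ∧ β - α = (b - a) / 2^n ∧
      wInt u (Set.Ioo α β) ≤ wInt u (Set.Ioo a b) / 2^n := by
  induction n with
  | zero => exact ⟨a, b, le_rfl, le_rfl, by simp, by simp⟩
  | succ n ih =>
    obtain ⟨α, β, haα, hβb, hlen, hU⟩ := ih
    have hαβ : α ≤ β := sub_nonneg.1 (hlen ▸ by positivity)
    set m := (α + β) / 2 with hm
    have hsum := hu.wInt_Ioo_add (show α ≤ m by linarith) (show m ≤ β by linarith)
    have hhalf : wInt u (Set.Ioo a b) / 2^(n+1) = wInt u (Set.Ioo a b) / 2^n / 2 := by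
      rw [pow_succ, div_div]
    rcases le_total (wInt u (Set.Ioo α m)) (wInt u (Set.Ioo m β)) with h | h
    · refine ⟨α, m, haα, by linarith, ?_, by rw [hhalf]; linarith⟩
      rw [pow_succ, ← div_div, ← hlen, hm]; ring
    · refine ⟨m, β, by linarith, hβb, ?_, by rw [hhalf]; linarith⟩
      rw [pow_succ, ← div_div, ← hlen, hm]; ring

lemma IsWeight.not_forall_mul_sub_le_wInt_Ioo_rpow (hu : IsWeight u) {p : ℝ} (hp : 0 < p)
    (hp1 : p < 1) {a b c K : ℝ} (hab : a < b) (hc : 0 < c) :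
    ¬ ∀ α β : ℝ, a ≤ α → α < β → β ≤ b →
      c * (β - α) ≤ K * wInt u (Set.Ioo α β) ^ (1/p) := by
  intro h
  set U := wInt u (Set.Ioo a b)
  have hU : 0 < U := hu.wInt_Ioo_pos hab
  have hδ : 0 < 1/p - 1 := by rw [sub_pos, lt_one_div one_pos hp, div_one]; exact hp1
  have hK : 0 < K := pos_of_mul_pos_left ((by positivity : 0 < c * (b - a)).trans_le
    (h a b le_rfl hab le_rfl)) (by positivity)
  have key : ∀ n : ℕ, c * (b - a) ≤ K * U ^ (1/p) * ((1/2:ℝ)^n) ^ (1/p - 1) := by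
    intro n
    obtain ⟨α, β, haα, hβb, hlen, hαβU⟩ := hu.exists_Ioo_wInt_le_div_two_pow hab.le n
    set y := (1/2:ℝ)^n
    have hy : 0 < y := by positivity
    rw [div_eq_mul_one_div _ ((2:ℝ)^n), ← one_div_pow] at hlen hαβU
    have hαβ : α < β := by nlinarith
    refine le_of_mul_le_mul_right ?_ hy
    calc c * (b - a) * y = c * (β - α) := by rw [hlen]; ring
      _ ≤ K * wInt u (Set.Ioo α β) ^ (1/p) := h α β haα hαβ hβb
      _ ≤ K * (U * y) ^ (1/p) := by
        gcongr
        exact (hu.wInt_Ioo_pos hαβ).le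
      _ = K * U ^ (1/p) * y ^ (1/p - 1) * y := by
        rw [Real.mul_rpow hU.le hy.le, Real.rpow_sub_one hy.ne']
        field_simp
  have hlim : Tendsto (fun n : ℕ => K * U ^ (1/p) * ((1/2:ℝ)^n) ^ (1/p - 1)) atTop (𝓝 0) := by
    have := ((tendsto_pow_atTop_nhds_zero_of_lt_one (by norm_num) (by norm_num : (1/2:ℝ) < 1)
      ).rpow_const (Or.inr hδ.le)).const_mul (K * U ^ (1/p))
    rwa [Real.zero_rpow hδ.ne', mul_zero] at this
  have := ge_of_tendsto' hlim key
  nlinarith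

end SmallExponent

/-- if `p < 1` or `p ≠ r`, no doubling weight `u` makes
`H : L^{p,q}(u) → L^{r,s}(u)` well defined and bounded. -/
theorem no_doubling_weight_offdiagonal (p r : ℝ) (q s : ℝ≥0∞)
    (hp : 0 < p) (hr : 0 < r) (hq : 0 < q) (hs : 0 < s) (hpr : p < 1 ∨ p ≠ r) :
    ¬ ∃ u : ℝ → ℝ, IsWeight u ∧ DoublingWeight u ∧
      (∀ f : ℝ → ℝ, MemLpq p q u f → ∀ᵐ x : ℝ ∂volume, ∃ L, HasHilbert f x L) ∧
      ∃ C : ℝ, 0 < C ∧ ∀ f : ℝ → ℝ, MemLpq p q u f →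
        lpqNorm r s u (hilbert f) ≤ ENNReal.ofReal C * lpqNorm p q u f := by
  rintro ⟨u, hu, hd, -, C, hC, hbd⟩
  obtain ⟨K, htest⟩ := exists_testing_inequality hp hr hq hs hu hC hbd
  by_cases hpr' : p = r
  · subst hpr'
    refine hu.not_forall_mul_sub_le_wInt_Ioo_rpow (K := K) hp (hpr.resolve_right (not_not.2 rfl))
      one_pos (Real.rpow_pos_of_pos (hu.wInt_Ioo_pos one_lt_two) (1/p)) fun α β hα hαβ hβ => ?_
    simpa [mul_comm] using htest 0 α β 1 hα hαβ hβ
  · refine hpr' (hu.eq_of_forall_wInt_Ioo_rpow_le (K := K) hd hp fun a b hab => ?_)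
    refine le_of_mul_le_mul_left ?_ (sub_pos.2 hab)
    linarith [htest a a b b le_rfl hab le_rfl]
end
end
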